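/- arXiv:1702.02133 — 7 statements merged into one kernel-verified Lean document; each statement's English description precedes it below -/
import Mathlib

section
/- Let θ be any vertex ordering of G, let M ⊆ V be a module of G, and let σ = LexBFS⁺(θ), computed in G. Then σ[M] = LexBFS⁺(θ[M]), computed in the induced subgraph G[M]. -/
open SimpleGraph

/-- A vertex ordering of a finite graph on `V`: a bijection `V ≃ {1,…,n}` (as `Fin n`). -/
abbrev VertexOrder (V : Type*) [Fintype V] := V ≃ Fin (Fintype.card V)

/-- `σ` is a LexBFS ordering of `G` (the LexBFS 4-point condition). -/
def IsLexBFSOrder {V : Type*} [Fintype V] (G : SimpleGraph V) (σ : VertexOrder V) : Prop :=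
  ∀ a b c : V, σ a < σ b → σ b < σ c → G.Adj a c → ¬ G.Adj a b →
    ∃ d : V, σ d < σ a ∧ G.Adj d b ∧ ¬ G.Adj d c

/-- `τ = LexBFS⁺(ρ)`: `τ` is a LexBFS ordering of `G` such that whenever `u ≺_τ v` and every
vertex `w ≺_τ u` satisfies `wu ∈ E ↔ wv ∈ E`, one has `v ≺_ρ u`. -/
def IsLexBFSPlus {V : Type*} [Fintype V] (G : SimpleGraph V) (ρ τ : VertexOrder V) : Prop :=
  IsLexBFSOrder G τ ∧
    ∀ u v : V, τ u < τ v → (∀ w : V, τ w < τ u → (G.Adj w u ↔ G.Adj w v)) → ρ v < ρ u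

/-- `G` has a LexBFS⁺ cycle of length `k`: pairwise distinct orderings `σ_0, …, σ_{k-1}` with
`σ_{i+1 mod k} = LexBFS⁺(σ_i)`. -/
def HasLexBFSCycle {V : Type*} [Fintype V] (G : SimpleGraph V) (k : ℕ) : Prop :=
  ∃ σ : ℕ → VertexOrder V,
    (∀ i j : ℕ, i < k → j < k → σ i = σ j → i = j) ∧
    ∀ i : ℕ, i < k → IsLexBFSPlus G (σ i) (σ ((i + 1) % k))

/-- `LexCycle(G)`: the maximum length of a LexBFS⁺ cycle of `G`. -/
noncomputable def LexCycle {V : Type*} [Fintype V] (G : SimpleGraph V) : ℕ :=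
  sSup {k | HasLexBFSCycle G k}

/-- `M` is a module of `G`: every vertex outside `M` is adjacent to all of `M` or to none. -/
def IsModule {V : Type*} (G : SimpleGraph V) (M : Set V) : Prop :=
  ∀ v ∉ M, (∀ u ∈ M, G.Adj v u) ∨ (∀ u ∈ M, ¬ G.Adj v u)

/-- `σM` is the restriction `σ[M]` of the ordering `σ` to `M`: it orders the vertices
of `M` in the same relative order as `σ`. -/
def IsRestriction {V : Type*} [Fintype V] (σ : VertexOrder V) (M : Set V) [Fintype M]
    (σM : VertexOrder M) : Prop :=
  ∀ u v : M, σM u < σM v ↔ σ (u : V) < σ (v : V)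

/-- If `M` is a module of `G` and `σ = LexBFS⁺(θ)` (computed in `G`), then
`σ[M] = LexBFS⁺(θ[M])` (computed in `G[M]`). -/
theorem lexBFSPlus_restrict_module {V : Type*} [Fintype V] (G : SimpleGraph V)
    (M : Set V) [Fintype M] (hM : IsModule G M)
    (θ σ : VertexOrder V) (hσ : IsLexBFSPlus G θ σ)
    (θM σM : VertexOrder M) (hθM : IsRestriction θ M θM) (hσM : IsRestriction σ M σM) :
    IsLexBFSPlus (G.induce M) θM σM := by
  constructor
  · intro a b c hab hbc hac hnab
    rw [hσM] at hab hbc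
    obtain ⟨d, hd, hdb, hdc⟩ := hσ.1 a b c hab hbc hac hnab
    have hdM : d ∈ M := by
      by_contra hdM
      rcases hM d hdM with h | h
      · exact hdc (h c c.2)
      · exact h b b.2 hdb
    exact ⟨⟨d, hdM⟩, (hσM _ _).mpr hd, hdb, hdc⟩
  · intro u v huv h
    have := hσ.2 u v ((hσM u v).mp huv) ?_
    · exact (hθM v u).mpr this
    intro w hw
    by_cases hwM : w ∈ M
    · exact h ⟨w, hwM⟩ ((hσM _ _).mpr hw)
    · rcases hM w hwM with hall | hnone
      · exact ⟨fun _ => hall v v.2, fun _ => hall u u.2⟩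
      · exact ⟨fun hx => absurd hx (hnone u u.2), fun hx => absurd hx (hnone v v.2)⟩
end

section
/- Let σ be an ordering of G that is simultaneously a LexBFS ordering and a cocomparability ordering. Then for every triple a ≺_σ b ≺_σ c with ac ∈ E and ab ∉ E, one has bc ∈ E and there exists a vertex d with d ≺_σ a, da ∈ E, db ∈ E and dc ∉ E; in particular the vertices d, a, b, c induce a 4-cycle in G. -/
open SimpleGraph

/-- `σ` is a cocomparability ordering of `G`. -/
def IsCocompOrder {V : Type*} [Fintype V] (G : SimpleGraph V) (σ : VertexOrder V) : Prop :=
  ∀ a b c : V, σ a < σ b → σ b < σ c → G.Adj a c → (G.Adj a b ∨ G.Adj b c)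

/-- `σ` is a proper interval (PI-) ordering of `G`. -/
def IsPIOrder {V : Type*} [Fintype V] (G : SimpleGraph V) (σ : VertexOrder V) : Prop :=
  ∀ a b c : V, σ a < σ b → σ b < σ c → G.Adj a c → (G.Adj a b ∧ G.Adj b c)

/-- `σ` is an interval (I-) ordering of `G`. -/
def IsIntervalOrder {V : Type*} [Fintype V] (G : SimpleGraph V) (σ : VertexOrder V) : Prop :=
  ∀ a b c : V, σ a < σ b → σ b < σ c → G.Adj a c → G.Adj a b

/-- The LexBFS `C₄` property: if `σ` is both a LexBFS and a cocomparability ordering and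
`a ≺ b ≺ c` with `ac ∈ E`, `ab ∉ E`, then `bc ∈ E` and there is `d ≺ a` with `da, db ∈ E`
and `dc ∉ E`; hence `d, a, b, c` induce a 4-cycle. -/
theorem lexBFS_cocomp_c4 {V : Type*} [Fintype V] (G : SimpleGraph V) (σ : VertexOrder V)
    (hlex : IsLexBFSOrder G σ) (hco : IsCocompOrder G σ)
    (a b c : V) (hab : σ a < σ b) (hbc : σ b < σ c) (hac : G.Adj a c) (hnab : ¬ G.Adj a b) :
    G.Adj b c ∧ ∃ d : V, σ d < σ a ∧ G.Adj d a ∧ G.Adj d b ∧ ¬ G.Adj d c := by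
  have hbcE : G.Adj b c := (hco a b c hab hbc hac).resolve_left hnab
  obtain ⟨d, hda, hdb, hdc⟩ := hlex a b c hab hbc hac hnab
  have hdaE : G.Adj d a := (hco d a b hda hab hdb).resolve_right hnab
  exact ⟨hbcE, d, hda, hdaE, hdb, hdc⟩
end

section
/- Let σ be a PI-order of a graph G and let τ = LexBFS⁺(σ). Then for every edge uv ∈ E, u ≺_σ v if and only if v ≺_τ u. -/
open SimpleGraph

/-- If `σ` is a PI-order of `G` and `τ = LexBFS⁺(σ)`, then every edge `uv ∈ E` is flipped:
`u ≺_σ v` iff `v ≺_τ u`. -/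
theorem piOrder_lexBFSPlus_flips_edges {V : Type*} [Fintype V] (G : SimpleGraph V)
    (σ τ : VertexOrder V) (hσ : IsPIOrder G σ) (hτ : IsLexBFSPlus G σ τ) :
    ∀ u v : V, G.Adj u v → (σ u < σ v ↔ τ v < τ u) := by
    classical
  have key : ∀ p : ℕ, ∀ u : V, (τ u : ℕ) = p → σ u = Fin.rev (τ u) := by
    intro p
    induction p using Nat.strong_induction_on with
    | _ p ih =>
      intro u hp
      have IH : ∀ w : V, τ w < τ u → σ w = Fin.rev (τ w) := fun w hw =>
        ih _ (hp ▸ hw) w rfl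
      obtain ⟨v, hσv⟩ : ∃ v, σ v = Fin.rev (τ u) := ⟨σ.symm _, σ.apply_symm_apply _⟩
      by_cases huv : u = v
      · rw [huv]; rw [huv] at hσv; exact hσv
      -- τ u < τ v
      have hτuv : τ u < τ v := by
        rcases lt_trichotomy (τ u) (τ v) with h | h | h
        · exact h
        · exact absurd (τ.injective h) huv
        · have := IH v h
          rw [hσv] at this
          exact absurd (Fin.rev_injective this) (ne_of_gt h)
      -- σ u < σ v
      have hσuv : σ u < σ v := by
        have hne : σ u ≠ σ v := fun h => huv (σ.injective h)
        rcases lt_or_gt_of_ne hne with h | h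
        · exact h
        · exfalso
          set A : Finset V := Finset.univ.filter (fun w => τ w < τ u) with hA
          set B : Finset (Fin (Fintype.card V)) :=
            Finset.univ.filter (fun j => Fin.rev (τ u) < j) with hB
          have hsub : A.image σ ⊆ B := by
            intro j hj
            rw [Finset.mem_image] at hj
            obtain ⟨w, hwA, rfl⟩ := hj
            rw [hA, Finset.mem_filter] at hwA
            rw [hB, Finset.mem_filter]
            refine ⟨Finset.mem_univ _, ?_⟩
            rw [IH w hwA.2]
            exact Fin.rev_lt_rev.mpr hwA.2
          have hAcard : A.card = (τ u : ℕ) := by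
            have hAe : A = (Finset.Iio (τ u)).image τ.symm := by
              ext w
              simp only [hA, Finset.mem_filter, Finset.mem_univ, true_and,
                Finset.mem_image, Finset.mem_Iio]
              constructor
              · intro h2; exact ⟨τ w, h2, by simp⟩
              · rintro ⟨a, ha, rfl⟩; simpa using ha
            rw [hAe, Finset.card_image_of_injective _ τ.symm.injective]
            simp
          have hBcard : B.card = (τ u : ℕ) := by
            have hBe : B = Finset.Ioi (Fin.rev (τ u)) := by ext j; simp [hB]
            rw [hBe]
            simp [Fin.rev]
            omega
          have himg : A.image σ = B := by
            apply Finset.eq_of_subset_of_card_le hsub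
            rw [Finset.card_image_of_injective _ σ.injective, hAcard, hBcard]
          have hmem : σ u ∈ B := by
            rw [hB, Finset.mem_filter]
            exact ⟨Finset.mem_univ _, hσv ▸ h⟩
          rw [← himg, Finset.mem_image] at hmem
          obtain ⟨w, hwA, hwe⟩ := hmem
          rw [hA, Finset.mem_filter] at hwA
          exact absurd (σ.injective hwe ▸ hwA.2) (lt_irrefl _)
      -- plus property gives a witness
      have hnlt : ¬ σ v < σ u := not_lt.mpr hσuv.le
      have hex : ¬ ∀ w : V, τ w < τ u → (G.Adj w u ↔ G.Adj w v) :=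
        fun hall => hnlt (hτ.2 u v hτuv hall)
      push_neg at hex
      obtain ⟨w, hw, hwiff⟩ := hex
      have hσvw : σ v < σ w := by
        rw [hσv, IH w hw]; exact Fin.rev_lt_rev.mpr hw
      exfalso
      rcases hwiff with ⟨hwu, hwv⟩ | ⟨hwu, hwv⟩
      · exact hwv ((hσ u v w hσuv hσvw hwu.symm).2.symm)
      · obtain ⟨d, hd, hdu, hdv⟩ := hτ.1 w u v hw hτuv hwv hwu
        have hσvd : σ v < σ d := by
          rw [hσv, IH d (hd.trans hw)]; exact Fin.rev_lt_rev.mpr (hd.trans hw)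
        exact hdv ((hσ u v d hσuv hσvd hdu.symm).2.symm)
  intro u v _
  rw [key _ u rfl, key _ v rfl, Fin.rev_lt_rev]
end

section
/- Let σ be a PI-order of a graph G. Then LexBFS⁺(σ) = σ^d, the reverse of σ. -/
open SimpleGraph

/-- The dual (reverse) ordering `σᵈ` of `σ`, with `σᵈ(v) = n + 1 - σ(v)`. -/
def dualOrder {V : Type*} [Fintype V] (σ : VertexOrder V) : VertexOrder V :=
  σ.trans (Fin.revPerm)

/-- If `σ` is a PI-order of `G`, then `LexBFS⁺(σ) = σᵈ`, the reverse of `σ`. -/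
theorem lexBFSPlus_of_piOrder_eq_dual {V : Type*} [Fintype V] (G : SimpleGraph V)
    (σ : VertexOrder V) (hσ : IsPIOrder G σ) :
    IsLexBFSPlus G σ (dualOrder σ) := by
  constructor
  · intro a b c hab hbc hac hnab
    simp only [dualOrder, Equiv.trans_apply, Fin.revPerm_apply, Fin.rev_lt_rev] at hab hbc
    exact absurd (hσ c b a hbc hab hac.symm).2.symm hnab
  · intro u v huv _
    simpa only [dualOrder, Equiv.trans_apply, Fin.revPerm_apply, Fin.rev_lt_rev] using huv
end

section
/- Let G be a cobipartite graph and σ an ordering of G that is simultaneously a LexBFS ordering and a cocomparability ordering. Then for every triple a ≺_σ b ≺_σ c, at least one of ab, bc is an edge of G. -/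
open SimpleGraph

/-- `G` is cobipartite: its vertex set can be partitioned into two (possibly empty) cliques. -/
def IsCobipartite {V : Type*} (G : SimpleGraph V) : Prop :=
  ∃ A : Set V, G.IsClique A ∧ G.IsClique Aᶜ

/-- In a LexBFS cocomparability ordering of a cobipartite graph, for every triple
`a ≺ b ≺ c` at least one of `ab`, `bc` is an edge. -/
theorem cobipartite_triple_adj {V : Type*} [Fintype V] (G : SimpleGraph V)
    (hcb : IsCobipartite G) (σ : VertexOrder V)
    (hlex : IsLexBFSOrder G σ) (hco : IsCocompOrder G σ) :
    ∀ a b c : V, σ a < σ b → σ b < σ c → (G.Adj a b ∨ G.Adj b c) := by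
  intro a b c hab hbc
  by_contra h
  push_neg at h
  obtain ⟨hnab, hnbc⟩ := h
  have hnac : ¬ G.Adj a c := fun hac => by
    rcases hco a b c hab hbc hac with h1 | h1
    · exact hnab h1
    · exact hnbc h1
  have hane : a ≠ b := fun h => by simp [h] at hab
  have hbne : b ≠ c := fun h => by simp [h] at hbc
  have hace : a ≠ c := fun h => by subst h; exact absurd (hab.trans hbc) (lt_irrefl _)
  obtain ⟨A, hA, hAc⟩ := hcb
  by_cases ha : a ∈ A <;> by_cases hb : b ∈ A <;> by_cases hc : c ∈ A
  · exact hnab (hA ha hb hane)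
  · exact hnab (hA ha hb hane)
  · exact hnac (hA ha hc hace)
  · exact hnbc (hAc hb hc hbne)
  · exact hnbc (hA hb hc hbne)
  · exact hnac (hAc ha hc hace)
  · exact hnab (hAc ha hb hane)
  · exact hnab (hAc ha hb hane)
end

section
/- Let M be a p×q matrix with entries in {0,1}. Define M_0 = M and, for i ≥ 1, let M_i be obtained from M_{i−1} by sorting its columns lexicographically when i is odd, and by sorting its rows lexicographically when i is even. Then there exists n ≥ 1 with M_n = M_{n−1}. -/
/-- Lexicographic (reflexive) comparison of 0–1 vectors: `X ≤_lex Y` iff `X = Y` or at the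
least index where they differ, `X` has the smaller entry. -/
def LexLE {q : ℕ} (X Y : Fin q → Fin 2) : Prop :=
  X = Y ∨ ∃ k : Fin q, (∀ j : Fin q, j < k → X j = Y j) ∧ X k < Y k

/-- The rows of `M` appear in nondecreasing lexicographic order. -/
def RowsSorted {p q : ℕ} (M : Fin p → Fin q → Fin 2) : Prop :=
  ∀ i i' : Fin p, i < i' → LexLE (M i) (M i')

/-- The columns of `M` appear in nondecreasing lexicographic order. -/
def ColsSorted {p q : ℕ} (M : Fin p → Fin q → Fin 2) : Prop :=
  ∀ j j' : Fin q, j < j' → LexLE (fun i => M i j) (fun i => M i j')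

/-- `M'` is obtained from `M` by sorting its rows lexicographically. -/
def IsRowSortOf {p q : ℕ} (M M' : Fin p → Fin q → Fin 2) : Prop :=
  (∃ π : Equiv.Perm (Fin p), ∀ i, M' i = M (π i)) ∧ RowsSorted M'

/-- `M'` is obtained from `M` by sorting its columns lexicographically. -/
def IsColSortOf {p q : ℕ} (M M' : Fin p → Fin q → Fin 2) : Prop :=
  (∃ π : Equiv.Perm (Fin q), ∀ i j, M' i j = M i (π j)) ∧ ColsSorted M'

namespace AltSortAux

noncomputable instance instA (n : ℕ) : LinearOrder (Lex (Fin n → Fin 2)) := by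
  haveI : WellFoundedLT (Fin n) := inferInstance
  infer_instance

noncomputable instance instB (p q : ℕ) : LinearOrder (Lex (Fin p → Lex (Fin q → Fin 2))) := by
  haveI : WellFoundedLT (Fin p) := inferInstance
  infer_instance

lemma lt_iff {n : ℕ} {x y : Fin n → Fin 2} :
    toLex x < toLex y ↔ ∃ k : Fin n, (∀ j, j < k → x j = y j) ∧ x k < y k := Iff.rfl

lemma lt_iff' {p q : ℕ} {x y : Fin p → Lex (Fin q → Fin 2)} :
    toLex x < toLex y ↔ ∃ k : Fin p, (∀ j, j < k → x j = y j) ∧ x k < y k := Iff.rfl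

lemma card_filter_perm {n : ℕ} (π : Equiv.Perm (Fin n)) (P P' : Fin n → Prop)
    [DecidablePred P] [DecidablePred P'] (h : ∀ j, P' j ↔ P (π j)) :
    (Finset.univ.filter P').card = (Finset.univ.filter P).card := by
  refine Finset.card_bij' (fun a _ => π a) (fun b _ => π.symm b) ?_ ?_ ?_ ?_
  · intro a ha
    simp only [Finset.mem_filter, Finset.mem_univ, true_and] at ha ⊢
    exact (h a).1 ha
  · intro b hb
    simp only [Finset.mem_filter, Finset.mem_univ, true_and] at hb ⊢
    exact (h _).2 (by rwa [Equiv.apply_symm_apply])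
  · intro a _; simp
  · intro b _; simp

lemma rowsort_le {p q : ℕ} (A A' : Fin p → Fin q → Fin 2) (π : Equiv.Perm (Fin p))
    (hperm : ∀ i, A' i = A (π i))
    (hmono : Monotone fun i => toLex (A' i)) :
    toLex (fun i => toLex (A' i)) ≤ toLex (fun i => toLex (A i)) := by
  classical
  by_contra hcon
  rw [not_le] at hcon
  obtain ⟨i, hpre, hlt⟩ := lt_iff'.1 hcon
  set b : Fin q → Fin 2 := A' i with hb
  set S : Finset (Fin p) := Finset.univ.filter (fun t => toLex (A t) < toLex b) with hS
  set S' : Finset (Fin p) := Finset.univ.filter (fun t => toLex (A' t) < toLex b) with hS'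
  have hcard : S'.card = S.card := by
    refine card_filter_perm π _ _ ?_
    intro t
    rw [hperm]
  have hsub : S' ⊆ S := by
    intro t ht
    rw [Finset.mem_filter] at ht ⊢
    refine ⟨Finset.mem_univ _, ?_⟩
    have htlt : toLex (A' t) < toLex b := ht.2
    have hti : t < i := by
      by_contra hge
      push_neg at hge
      exact absurd (hmono hge) (not_le.2 htlt)
    have hAt : A t = A' t := toLex.injective (hpre t hti)
    rw [hAt]
    exact htlt
  have hiS : i ∈ S := Finset.mem_filter.2 ⟨Finset.mem_univ _, hlt⟩
  have hiS' : i ∉ S' := by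
    rw [Finset.mem_filter]
    rintro ⟨-, h⟩
    exact lt_irrefl _ h
  have : S'.card < S.card :=
    Finset.card_lt_card ((Finset.ssubset_iff_of_subset hsub).2 ⟨i, hiS, hiS'⟩)
  omega

lemma colsort_le {p q : ℕ} (A A' : Fin p → Fin q → Fin 2) (π : Equiv.Perm (Fin q))
    (hperm : ∀ i j, A' i j = A i (π j))
    (hmono : Monotone fun j => toLex (fun t => A' t j)) :
    toLex (fun i => toLex (A' i)) ≤ toLex (fun i => toLex (A i)) := by
  classical
  by_contra hcon
  rw [not_le] at hcon
  obtain ⟨i, hpre, hlt⟩ := lt_iff'.1 hcon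
  obtain ⟨j, hjpre, hjlt⟩ := lt_iff.1 hlt
  have hrows : ∀ t : Fin p, t < i → A t = A' t := fun t ht => toLex.injective (hpre t ht)
  set b : Fin p → Fin 2 := fun t => A' t j with hb
  set Q : (Fin p → Fin 2) → Prop :=
    fun v => ∃ t : Fin p, t ≤ i ∧ (∀ s, s < t → v s = b s) ∧ v t < b t with hQ
  have hQlt : ∀ v, Q v → toLex v < toLex b := by
    rintro v ⟨t, -, h1, h2⟩
    exact lt_iff.2 ⟨t, h1, h2⟩
  have hQcongr : ∀ v w : Fin p → Fin 2, (∀ s, s ≤ i → v s = w s) → Q v → Q w := by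
    rintro v w hvw ⟨t, hti, h1, h2⟩
    refine ⟨t, hti, fun s hs => ?_, ?_⟩
    · rw [← hvw s (le_of_lt (lt_of_lt_of_le hs hti))]
      exact h1 s hs
    · rw [← hvw t hti]
      exact h2
  set S : Finset (Fin q) := Finset.univ.filter (fun j' => Q (fun t => A t j')) with hS
  set S' : Finset (Fin q) := Finset.univ.filter (fun j' => Q (fun t => A' t j')) with hS'
  have hcard : S'.card = S.card := by
    refine card_filter_perm π _ _ ?_
    intro t
    constructor
    · intro h
      refine hQcongr _ _ ?_ h
      intro s _
      rw [hperm]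
    · intro h
      refine hQcongr _ _ ?_ h
      intro s _
      rw [hperm]
  have hsub : S' ⊆ S := by
    intro j' hj'
    rw [Finset.mem_filter] at hj' ⊢
    refine ⟨Finset.mem_univ _, ?_⟩
    have hq' : Q (fun t => A' t j') := hj'.2
    have hjj : j' < j := by
      by_contra hge
      push_neg at hge
      exact absurd (hQlt _ hq') (not_lt.2 (hmono hge))
    refine hQcongr _ _ ?_ hq'
    intro s hs
    rcases lt_or_eq_of_le hs with h | h
    · rw [hrows s h]
    · subst h
      exact (hjpre j' hjj).symm
  have hjS : j ∈ S := by
    refine Finset.mem_filter.2 ⟨Finset.mem_univ _, ⟨i, le_refl i, fun s hs => ?_, hjlt⟩⟩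
    show A s j = A' s j
    rw [hrows s hs]
  have hjS' : j ∉ S' := by
    rw [Finset.mem_filter]
    rintro ⟨-, h⟩
    exact lt_irrefl _ (hQlt _ h)
  have : S'.card < S.card :=
    Finset.card_lt_card ((Finset.ssubset_iff_of_subset hsub).2 ⟨j, hjS, hjS'⟩)
  omega

end AltSortAux


lemma lexLE_iff {n : ℕ} {x y : Fin n → Fin 2} : LexLE x y ↔ toLex x ≤ toLex y := by
  rw [le_iff_lt_or_eq, LexLE]
  constructor
  · rintro (h | h)
    · exact Or.inr (congrArg toLex h)
    · exact Or.inl (AltSortAux.lt_iff.2 h)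
  · rintro (h | h)
    · exact Or.inr (AltSortAux.lt_iff.1 h)
    · exact Or.inl (toLex.injective h)

/-- Alternately sorting the columns (at odd steps) and the rows (at even steps) of a 0–1
matrix lexicographically reaches a fixed point: some `M_n` equals `M_{n-1}`. -/
theorem alternate_sorting_reaches_fixed_point (p q : ℕ)
    (M : ℕ → Fin p → Fin q → Fin 2)
    (hodd : ∀ i : ℕ, 1 ≤ i → Odd i → IsColSortOf (M (i - 1)) (M i))
    (heven : ∀ i : ℕ, 1 ≤ i → Even i → IsRowSortOf (M (i - 1)) (M i)) :
    ∃ n : ℕ, 1 ≤ n ∧ M n = M (n - 1) := by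

  classical
  set F : (Fin p → Fin q → Fin 2) → Lex (Fin p → Lex (Fin q → Fin 2)) :=
    fun N => toLex (fun i => toLex (N i)) with hF
  have hFinj : Function.Injective F := by
    intro a b hab
    have h1 := toLex.injective hab
    funext i j
    exact congrFun (toLex.injective (congrFun h1 i)) j
  have hstep : ∀ n : ℕ, 1 ≤ n → F (M n) ≤ F (M (n - 1)) := by
    intro n hn
    rcases Nat.even_or_odd n with he | ho
    · obtain ⟨⟨π, hπ⟩, hrs⟩ := heven n hn he
      refine AltSortAux.rowsort_le (M (n - 1)) (M n) π hπ ?_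
      rw [monotone_iff_forall_lt]
      intro a b hab
      exact lexLE_iff.1 (hrs a b hab)
    · obtain ⟨⟨π, hπ⟩, hcs⟩ := hodd n hn ho
      refine AltSortAux.colsort_le (M (n - 1)) (M n) π hπ ?_
      rw [monotone_iff_forall_lt]
      intro a b hab
      exact lexLE_iff.1 (hcs a b hab)
  by_contra hcon
  push_neg at hcon
  have hanti : StrictAnti fun n => F (M n) := by
    apply strictAnti_nat_of_succ_lt
    intro n
    have h1 : (1 : ℕ) ≤ n + 1 := Nat.succ_le_succ (Nat.zero_le n)
    have h2 := hstep (n + 1) h1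
    simp only [Nat.add_sub_cancel] at h2
    refine lt_of_le_of_ne h2 fun h => ?_
    exact hcon (n + 1) h1 (by simpa using hFinj h)
  haveI : Finite (Lex (Fin q → Fin 2)) := Finite.of_equiv _ toLex
  haveI : Finite (Lex (Fin p → Lex (Fin q → Fin 2))) := Finite.of_equiv _ toLex
  obtain ⟨a, b, hne, heq⟩ := Finite.exists_ne_map_eq_of_infinite (fun n => F (M n))
  exact hne (hanti.injective heq)
end

section
/- Every finite tree T (a connected acyclic simple graph) with at least two vertices satisfies LexCycle(T) = 2. -/
open SimpleGraph

set_option linter.unusedSectionVars false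
set_option linter.unusedVariables false

namespace LexTree

section M
variable {V : Type*} [DecidableEq V] {G : SimpleGraph V}


lemma shortest_split (hc : G.Connected) {x y u : V} (w : G.Walk x y)
    (hw : w.length = G.dist x y) (hu : u ∈ w.support) :
    G.dist x u = (w.takeUntil u hu).length ∧ G.dist u y = (w.dropUntil u hu).length ∧
      G.dist x u + G.dist u y = G.dist x y := by
  have h1 : G.dist x u ≤ (w.takeUntil u hu).length := dist_le _
  have h2 : G.dist u y ≤ (w.dropUntil u hu).length := dist_le _
  have h3 : (w.takeUntil u hu).length + (w.dropUntil u hu).length = w.length := by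
    rw [← Walk.length_append, Walk.take_spec]
  have h4 : G.dist x y ≤ G.dist x u + G.dist u y := hc.dist_triangle
  omega

lemma path_length_eq_dist (hT : G.IsTree) {x y : V} (p : G.Walk x y) (hp : p.IsPath) :
    p.length = G.dist x y := by
  obtain ⟨q, hq⟩ := hT.isConnected.exists_walk_length_eq_dist x y
  have hqp : q.IsPath := q.isPath_of_length_eq_dist hq
  have h := hT.IsAcyclic.path_unique ⟨p, hp⟩ ⟨q, hqp⟩
  rw [show p = q from congrArg Subtype.val h, hq]

lemma isPath_append {x y z : V} {p : G.Walk x y} {q : G.Walk y z}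
    (hp : p.IsPath) (hq : q.IsPath)
    (h : ∀ u, u ∈ p.support → u ∈ q.support → u = y) : (p.append q).IsPath := by
  rw [Walk.isPath_def, Walk.support_append, List.nodup_append]
  have hq' := hq.support_nodup
  have hcons : q.support = y :: q.support.tail := q.support_eq_cons
  rw [hcons, List.nodup_cons] at hq'
  refine ⟨hp.support_nodup, hq'.2, ?_⟩
  intro u hu b hu' hub
  subst hub
  have : u ∈ q.support := by rw [hcons]; exact List.mem_cons_of_mem _ hu'
  exact hq'.1 (h u hu this ▸ hu')

lemma exists_shortest_through (hc : G.Connected) {x y u : V}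
    (hu : G.dist x u + G.dist u y = G.dist x y) :
    ∃ w : G.Walk x y, w.length = G.dist x y ∧ u ∈ w.support := by
  obtain ⟨p, hp⟩ := hc.exists_walk_length_eq_dist x u
  obtain ⟨q, hq⟩ := hc.exists_walk_length_eq_dist u y
  refine ⟨p.append q, ?_, ?_⟩
  · rw [Walk.length_append, hp, hq, hu]
  · rw [Walk.mem_support_append_iff]
    exact Or.inl (Walk.end_mem_support p)

/-- Key: both `u,v` additive on the x-y geodesic, `dist x u ≤ dist x v`:
then `dist x u + dist u v = dist x v`. -/
lemma collinear (hT : G.IsTree) {x y u v : V}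
    (hu : G.dist x u + G.dist u y = G.dist x y)
    (hv : G.dist x v + G.dist v y = G.dist x y)
    (huv : G.dist x u ≤ G.dist x v) :
    G.dist x u + G.dist u v = G.dist x v := by
  have hc := hT.isConnected
  obtain ⟨w1, hw1, hu1⟩ := exists_shortest_through hc hu
  obtain ⟨w2, hw2, hv2⟩ := exists_shortest_through hc hv
  have hp1 : w1.IsPath := w1.isPath_of_length_eq_dist hw1
  have hp2 : w2.IsPath := w2.isPath_of_length_eq_dist hw2
  have he : w1 = w2 := congrArg Subtype.val (hT.IsAcyclic.path_unique ⟨w1, hp1⟩ ⟨w2, hp2⟩)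
  subst he
  -- now u, v ∈ w1.support
  have hsplit := shortest_split hc w1 hw1 hv2
  have hu' : u ∈ ((w1.takeUntil v hv2).append (w1.dropUntil v hv2)).support := by
    rw [Walk.take_spec]; exact hu1
  rcases (Walk.mem_support_append_iff _ _).mp hu' with h | h
  · -- u on the x..v piece
    have ht : (w1.takeUntil v hv2).length = G.dist x v := hsplit.1.symm
    have := shortest_split hc (w1.takeUntil v hv2) ht h
    exact this.2.2
  · -- u on the v..y piece : forces u = v
    have ht : (w1.dropUntil v hv2).length = G.dist v y := hsplit.2.1.symm
    have h2 := (shortest_split hc (w1.dropUntil v hv2) ht h).2.2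
    -- dist v u + dist u y = dist v y
    have hvu : G.dist v u = 0 := by omega
    have hveq : v = u := ((hc v u).dist_eq_zero_iff).mp hvu
    subst hveq
    simp [SimpleGraph.dist_self]

lemma geodesic_unique (hT : G.IsTree) {x y u v : V}
    (hu : G.dist x u + G.dist u y = G.dist x y)
    (hv : G.dist x v + G.dist v y = G.dist x y)
    (he : G.dist x u = G.dist x v) : u = v := by
  have h := collinear hT hu hv (le_of_eq he)
  have huv : G.dist u v = 0 := by omega
  exact ((hT.isConnected u v).dist_eq_zero_iff).mp huv

lemma exists_median (hT : G.IsTree) (x y z : V) :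
    ∃ m : V, G.dist x m + G.dist m y = G.dist x y ∧
      G.dist x m + G.dist m z = G.dist x z ∧
      G.dist y m + G.dist m z = G.dist y z := by
  classical
  have hc := hT.isConnected
  obtain ⟨p, hp⟩ := hc.exists_walk_length_eq_dist x y
  obtain ⟨q, hq⟩ := hc.exists_walk_length_eq_dist x z
  have hpp : p.IsPath := p.isPath_of_length_eq_dist hp
  have hqp : q.IsPath := q.isPath_of_length_eq_dist hq
  set S : Finset V := p.support.toFinset ∩ q.support.toFinset with hS
  have hSne : S.Nonempty := ⟨x, by simp [hS, Walk.start_mem_support]⟩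
  obtain ⟨m, hmS, hmax⟩ := Finset.exists_max_image S (fun u => G.dist x u) hSne
  have hmp : m ∈ p.support := List.mem_toFinset.mp (Finset.mem_inter.mp hmS).1
  have hmq : m ∈ q.support := List.mem_toFinset.mp (Finset.mem_inter.mp hmS).2
  have h1 := shortest_split hc p hp hmp
  have h2 := shortest_split hc q hq hmq
  refine ⟨m, h1.2.2, h2.2.2, ?_⟩
  -- build the path y -> m -> z
  have hdp : (p.dropUntil m hmp).length = G.dist m y := h1.2.1.symm
  have hdq : (q.dropUntil m hmq).length = G.dist m z := h2.2.1.symm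
  set r : G.Walk y z := (p.dropUntil m hmp).reverse.append (q.dropUntil m hmq) with hr
  have hrp : r.IsPath := by
    apply isPath_append (hpp.dropUntil _).reverse (hqp.dropUntil _)
    intro u hu1 hu2
    rw [Walk.support_reverse, List.mem_reverse] at hu1
    -- u on both drop pieces
    have hud1 := (shortest_split hc _ hdp hu1).2.2   -- dist m u + dist u y = dist m y
    have hud2 := (shortest_split hc _ hdq hu2).2.2   -- dist m u + dist u z = dist m z
    have huS : u ∈ S := by
      simp only [hS, Finset.mem_inter, List.mem_toFinset]
      exact ⟨Walk.support_dropUntil_subset p hmp hu1, Walk.support_dropUntil_subset q hmq hu2⟩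
    have hle : G.dist x u ≤ G.dist x m := hmax u huS
    have htri : G.dist x y ≤ G.dist x u + G.dist u y := hc.dist_triangle
    -- dist x u ≥ dist x m + dist m u
    have : G.dist m u = 0 := by omega
    exact (((hc m u).dist_eq_zero_iff).mp this).symm
  have hlen : r.length = G.dist m y + G.dist m z := by
    rw [hr, Walk.length_append, Walk.length_reverse, hdp, hdq]
  have := path_length_eq_dist hT r hrp
  rw [hlen] at this
  rw [SimpleGraph.dist_comm (u := y) (v := m)]
  exact this

lemma adj_dist (hT : G.IsTree) {w v : V} (h : G.Adj w v) (a : V) :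
    G.dist a v = G.dist a w + 1 ∨ G.dist a w = G.dist a v + 1 := by
  have hc := hT.isConnected
  have hwv : G.dist w v = 1 := by
    have hle : G.dist w v ≤ 1 := by simpa using dist_le h.toWalk
    have h0 : G.dist w v ≠ 0 := fun h0 => h.ne (((hc w v).dist_eq_zero_iff).mp h0)
    omega
  obtain ⟨m, hm1, hm2, hm3⟩ := exists_median hT w v a
  have c1 : G.dist a v = G.dist v a := SimpleGraph.dist_comm ..
  have c2 : G.dist a w = G.dist w a := SimpleGraph.dist_comm ..
  have c3 : G.dist v w = G.dist w v := SimpleGraph.dist_comm ..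
  have hor : G.dist w m = 0 ∨ G.dist m v = 0 := by omega
  rcases hor with h0 | h0
  · left
    have hwm : w = m := ((hc w m).dist_eq_zero_iff).mp h0
    rw [← hwm] at hm3
    omega
  · right
    have hmv : m = v := ((hc m v).dist_eq_zero_iff).mp h0
    rw [hmv] at hm2
    omega

/-- uniqueness of the "up" neighbour. -/
lemma up_unique (hT : G.IsTree) {a v w1 w2 : V}
    (h1 : G.Adj w1 v) (h2 : G.Adj w2 v)
    (hd1 : G.dist a w1 + 1 = G.dist a v) (hd2 : G.dist a w2 + 1 = G.dist a v) :
    w1 = w2 := by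
  have hc := hT.isConnected
  have e1 : G.dist w1 v = 1 := by
    have hle := dist_le h1.toWalk
    have hne : G.dist w1 v ≠ 0 := fun h0 => h1.ne (((hc w1 v).dist_eq_zero_iff).mp h0)
    simp at hle; omega
  have e2 : G.dist w2 v = 1 := by
    have hle := dist_le h2.toWalk
    have hne : G.dist w2 v ≠ 0 := fun h0 => h2.ne (((hc w2 v).dist_eq_zero_iff).mp h0)
    simp at hle; omega
  exact geodesic_unique hT (by omega : G.dist a w1 + G.dist w1 v = G.dist a v)
    (by omega : G.dist a w2 + G.dist w2 v = G.dist a v) (by omega)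

lemma four_point (hT : G.IsTree) (x y z w : V) :
    G.dist x y + G.dist z w ≤ max (G.dist x z + G.dist y w) (G.dist x w + G.dist y z) := by
  have hc := hT.isConnected
  obtain ⟨m, hm1, hm2, hm3⟩ := exists_median hT x y z
  obtain ⟨n, hn1, hn2, hn3⟩ := exists_median hT x y w
  have cm : G.dist y m = G.dist m y := SimpleGraph.dist_comm ..
  have cn : G.dist y n = G.dist n y := SimpleGraph.dist_comm ..
  rcases le_total (G.dist x m) (G.dist x n) with hle | hle
  · have col := collinear hT hm1 hn1 hle
    have t1 : G.dist z w ≤ G.dist z m + G.dist m w := hc.dist_triangle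
    have t2 : G.dist m w ≤ G.dist m n + G.dist n w := hc.dist_triangle
    have c1 : G.dist z m = G.dist m z := SimpleGraph.dist_comm ..
    refine le_trans ?_ (le_max_right _ _)
    omega
  · have col := collinear hT hn1 hm1 hle
    have t1 : G.dist z w ≤ G.dist z n + G.dist n w := hc.dist_triangle
    have t2 : G.dist z n ≤ G.dist z m + G.dist m n := hc.dist_triangle
    have c1 : G.dist z m = G.dist m z := SimpleGraph.dist_comm ..
    have c2 : G.dist m n = G.dist n m := SimpleGraph.dist_comm ..
    have c3 : G.dist z n = G.dist n z := SimpleGraph.dist_comm ..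
    refine le_trans ?_ (le_max_left _ _)
    omega

lemma two_sweep (hT : G.IsTree) {r a b : V}
    (h1 : ∀ x, G.dist r x ≤ G.dist r a) (h2 : ∀ x, G.dist a x ≤ G.dist a b)
    (x : V) : G.dist b x ≤ G.dist b a := by
  have h4 := four_point hT b x r a
  have c1 : G.dist b r = G.dist r b := SimpleGraph.dist_comm ..
  have c2 : G.dist x a = G.dist a x := SimpleGraph.dist_comm ..
  have c3 : G.dist x r = G.dist r x := SimpleGraph.dist_comm ..
  have c4 : G.dist b a = G.dist a b := SimpleGraph.dist_comm ..
  have g1 := h1 b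
  have g2 := h2 x
  have g3 := h1 x
  rcases le_max_iff.mp h4 with h | h <;> omega


end M

section E


variable {V : Type*} [Fintype V] [DecidableEq V] [Nonempty V]
  (G : SimpleGraph V) [DecidableRel G.Adj] (ρ : VertexOrder V)

noncomputable def labelVal : List V → V → ℕ
  | [], _ => 0
  | w :: l, v => (if G.Adj w v then 2 ^ l.length else 0) + labelVal l v

lemma labelVal_lt (l : List V) (v : V) : labelVal G l v < 2 ^ l.length := by
  induction l with
  | nil => simp [labelVal]
  | cons w l ih =>
      simp only [labelVal, List.length_cons, pow_succ]
      split <;> omega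

lemma labelVal_congr (l : List V) {u v : V} (h : ∀ w ∈ l, G.Adj w u ↔ G.Adj w v) :
    labelVal G l u = labelVal G l v := by
  induction l with
  | nil => rfl
  | cons w l ih =>
      simp only [labelVal]
      rw [ih (fun x hx => h x (List.mem_cons_of_mem _ hx))]
      have := h w List.mem_cons_self
      by_cases hw : G.Adj w u
      · rw [if_pos hw, if_pos (this.mp hw)]
      · rw [if_neg hw, if_neg (fun hc => hw (this.mpr hc))]

lemma bits (l₂ : List V) (d : V) {b c : V} (hadc : G.Adj d c) (hnb : ¬ G.Adj d b) :
    ∀ l₁ : List V, labelVal G (l₁ ++ d :: l₂) c ≤ labelVal G (l₁ ++ d :: l₂) b →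
    ∃ d' ∈ l₁, G.Adj d' b ∧ ¬ G.Adj d' c := by
  intro l₁
  induction l₁ with
  | nil =>
      intro hle
      exfalso
      simp only [List.nil_append, labelVal, if_pos hadc, if_neg hnb] at hle
      have := labelVal_lt G l₂ b
      omega
  | cons w l₁ ih =>
      intro hle
      simp only [List.cons_append, labelVal] at hle
      by_cases hwb : G.Adj w b
      · by_cases hwc : G.Adj w c
        · rw [if_pos hwb, if_pos hwc] at hle
          obtain ⟨d', hd', h1, h2⟩ := ih (by omega)
          exact ⟨d', List.mem_cons_of_mem _ hd', h1, h2⟩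
        · exact ⟨w, List.mem_cons_self, hwb, hwc⟩
      · by_cases hwc : G.Adj w c
        · exfalso
          rw [if_pos hwc, if_neg hwb] at hle
          have h1 := labelVal_lt G (l₁ ++ d :: l₂) b
          omega
        · rw [if_neg hwb, if_neg hwc] at hle
          obtain ⟨d', hd', h1, h2⟩ := ih (by omega)
          exact ⟨d', List.mem_cons_of_mem _ hd', h1, h2⟩

noncomputable def key (l : List V) (v : V) : ℕ :=
  labelVal G l v * Fintype.card V + (ρ v : ℕ)

lemma exists_pick (l : List V) (h : (Finset.univ.filter (fun v => v ∉ l)).Nonempty) :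
    ∃ b : V, b ∉ l ∧ ∀ v, v ∉ l → key G ρ l v ≤ key G ρ l b := by
  obtain ⟨b, hb, hmax⟩ := Finset.exists_max_image _ (key G ρ l) h
  simp only [Finset.mem_filter, Finset.mem_univ, true_and] at hb
  refine ⟨b, hb, fun v hv => hmax v ?_⟩
  simp only [Finset.mem_filter, Finset.mem_univ, true_and]
  exact hv

noncomputable def pick (l : List V) : V :=
  if h : (Finset.univ.filter (fun v => v ∉ l)).Nonempty then
    (exists_pick G ρ l h).choose
  else Classical.arbitrary V

lemma pick_spec (l : List V) (h : (Finset.univ.filter (fun v => v ∉ l)).Nonempty) :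
    pick G ρ l ∉ l ∧ ∀ v, v ∉ l → key G ρ l v ≤ key G ρ l (pick G ρ l) := by
  rw [pick, dif_pos h]
  exact (exists_pick G ρ l h).choose_spec

noncomputable def build : ℕ → List V
  | 0 => []
  | k + 1 => build k ++ [pick G ρ (build k)]

lemma build_length : ∀ k, (build G ρ k).length = k := by
  intro k
  induction k with
  | zero => rfl
  | succ k ih => simp [build, ih]

lemma build_prefix : ∀ {k m : ℕ}, k ≤ m → ∃ t, build G ρ m = build G ρ k ++ t := by
  intro k m
  induction m with
  | zero => intro h; exact ⟨[], by simp [Nat.le_zero.mp h]⟩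
  | succ m ih =>
      intro h
      rcases Nat.lt_or_ge k (m+1) with h' | h'
      · obtain ⟨t, ht⟩ := ih (by omega)
        exact ⟨t ++ [pick G ρ (build G ρ m)], by simp [build, ht]⟩
      · have : k = m + 1 := by omega
        exact ⟨[], by simp [this]⟩

lemma build_nodup : ∀ k, k ≤ Fintype.card V → (build G ρ k).Nodup := by
  intro k
  induction k with
  | zero => intro _; simp [build]
  | succ k ih =>
      intro h
      have hnd := ih (by omega)
      have hne : (Finset.univ.filter (fun v => v ∉ build G ρ k)).Nonempty := by
        by_contra hc
        rw [Finset.not_nonempty_iff_eq_empty, Finset.filter_eq_empty_iff] at hc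
        have hsub : Finset.univ ⊆ (build G ρ k).toFinset := by
          intro v _
          rw [List.mem_toFinset]
          by_contra hv
          exact (hc (Finset.mem_univ v)) hv
        have hcard := Finset.card_le_card hsub
        rw [List.toFinset_card_of_nodup hnd, build_length] at hcard
        simp at hcard
        omega
      have hp := (pick_spec G ρ (build G ρ k) hne).1
      simp [build, List.nodup_append, hnd, hp]
      exact fun a ha he => hp (he ▸ ha)

variable (hV : 0 < Fintype.card V)

lemma cand_nonempty {k : ℕ} (hk : k < Fintype.card V) :
    (Finset.univ.filter (fun v => v ∉ build G ρ k)).Nonempty := by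
  by_contra hc
  rw [Finset.not_nonempty_iff_eq_empty, Finset.filter_eq_empty_iff] at hc
  have hsub : Finset.univ ⊆ (build G ρ k).toFinset := by
    intro v _
    rw [List.mem_toFinset]
    by_contra hv
    exact (hc (Finset.mem_univ v)) hv
  have hcard := Finset.card_le_card hsub
  rw [List.toFinset_card_of_nodup (build_nodup G ρ k (by omega)), build_length] at hcard
  simp at hcard
  omega

lemma build_getElem? : ∀ {k i : ℕ}, i < k → (build G ρ k)[i]? = some (pick G ρ (build G ρ i)) := by
  intro k
  induction k with
  | zero => intro i hi; omega
  | succ k ih =>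
      intro i hi
      show (build G ρ k ++ [pick G ρ (build G ρ k)])[i]? = _
      rcases Nat.lt_or_ge i k with h | h
      · rw [List.getElem?_append_left (by rw [build_length]; exact h)]
        exact ih h
      · have hik : i = k := by omega
        subst hik
        rw [List.getElem?_append_right (le_of_eq (build_length G ρ _))]
        simp [build_length]

lemma getElem_build {k : ℕ} (hk : k ≤ Fintype.card V) {i : ℕ} (hi : i < k) :
    (build G ρ k)[i]'(by rw [build_length]; exact hi) =
    (build G ρ (Fintype.card V))[i]'(by rw [build_length]; omega) := by
  apply Option.some_injective
  rw [← List.getElem?_eq_getElem, ← List.getElem?_eq_getElem,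
    build_getElem? G ρ hi, build_getElem? G ρ (by omega : i < Fintype.card V)]

lemma elt_eq_pick {i : ℕ} (hi : i < Fintype.card V) :
    (build G ρ (Fintype.card V))[i]'(by rw [build_length]; exact hi) = pick G ρ (build G ρ i) := by
  apply Option.some_injective
  rw [← List.getElem?_eq_getElem, build_getElem? G ρ hi]

lemma mem_build_iff {k : ℕ} (hk : k ≤ Fintype.card V) (v : V) :
    v ∈ build G ρ k ↔ ∃ j : ℕ, ∃ hj : j < k,
      (build G ρ (Fintype.card V))[j]'(by rw [build_length]; omega) = v := by
  rw [List.mem_iff_getElem]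
  constructor
  · rintro ⟨j, hj, hg⟩
    rw [build_length] at hj
    refine ⟨j, hj, ?_⟩
    rw [← getElem_build G ρ hk hj]; exact hg
  · rintro ⟨j, hj, hg⟩
    refine ⟨j, by rw [build_length]; exact hj, ?_⟩
    rw [getElem_build G ρ hk hj]; exact hg

lemma key_max {i j : ℕ} (hij : i < j) (hj : j < Fintype.card V) :
    key G ρ (build G ρ i)
        ((build G ρ (Fintype.card V))[j]'(by rw [build_length]; omega)) ≤
      key G ρ (build G ρ i)
        ((build G ρ (Fintype.card V))[i]'(by rw [build_length]; omega)) := by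
  have hnd := build_nodup G ρ (Fintype.card V) le_rfl
  have hnotmem : (build G ρ (Fintype.card V))[j]'(by rw [build_length]; omega) ∉ build G ρ i := by
    intro hmem
    rw [mem_build_iff G ρ (by omega)] at hmem
    obtain ⟨j', hj', hg⟩ := hmem
    have : j' = j := by
      have := List.Nodup.getElem_inj_iff hnd |>.mp hg
      omega
    omega
  have hs := pick_spec G ρ (build G ρ i) (cand_nonempty G ρ (by omega))
  rw [elt_eq_pick G ρ (by omega : i < Fintype.card V)]
  exact hs.2 _ hnotmem

noncomputable def ordFun : Fin (Fintype.card V) → V := fun i =>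
  (build G ρ (Fintype.card V))[(i : ℕ)]'(by rw [build_length]; exact i.2)

lemma ordFun_bijective : Function.Bijective (ordFun G ρ) := by
  rw [Fintype.bijective_iff_injective_and_card]
  refine ⟨?_, by simp⟩
  intro i j hij
  have hnd := build_nodup G ρ (Fintype.card V) le_rfl
  have := (List.Nodup.getElem_inj_iff hnd).mp hij
  exact Fin.ext this

noncomputable def ord : VertexOrder V := (Equiv.ofBijective _ (ordFun_bijective G ρ)).symm

lemma ord_symm (i : Fin (Fintype.card V)) : (ord G ρ).symm i = ordFun G ρ i := rfl

lemma ord_ordFun (i : Fin (Fintype.card V)) : ord G ρ (ordFun G ρ i) = i := by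
  have : ordFun G ρ i = (ord G ρ).symm i := rfl
  rw [this, Equiv.apply_symm_apply]

lemma ordFun_ord (v : V) : ordFun G ρ (ord G ρ v) = v := by
  have := (ord G ρ).symm_apply_apply v
  rwa [ord_symm] at this

theorem exists_lexBFSPlus' : IsLexBFSPlus G ρ (ord G ρ) := by
  set n := Fintype.card V with hn
  set τ := ord G ρ
  have hpos : ∀ v : V, (τ v : ℕ) < n := fun v => (τ v).2
  have helt : ∀ v : V, (build G ρ n)[(τ v : ℕ)]'(by rw [build_length]; exact (τ v).2) = v :=
    fun v => ordFun_ord G ρ v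
  have hmemb : ∀ (v : V) (k : ℕ), k ≤ n → (v ∈ build G ρ k ↔ (τ v : ℕ) < k) := by
    intro v k hk
    rw [mem_build_iff G ρ hk]
    constructor
    · rintro ⟨j, hj, hg⟩
      have : ordFun G ρ ⟨j, by omega⟩ = v := hg
      have h2 := congrArg (τ ·) this
      rw [ord_ordFun] at h2
      rw [← h2]
      exact hj
    · intro hj
      exact ⟨(τ v : ℕ), hj, helt v⟩
  constructor
  · -- 4-point
    intro a b c hab hbc hac hnab
    set i := (τ b : ℕ)
    have hai : (τ a : ℕ) < i := hab
    have hic : i < (τ c : ℕ) := hbc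
    have hkey := key_max G ρ (i := i) (j := (τ c : ℕ)) hic (hpos c)
    rw [helt c] at hkey
    have hb : (build G ρ n)[i]'(by rw [build_length]; exact hpos b) = b := helt b
    rw [hb] at hkey
    -- label inequality
    have hlab : labelVal G (build G ρ i) c ≤ labelVal G (build G ρ i) b := by
      by_contra hcon
      push_neg at hcon
      have h1 : key G ρ (build G ρ i) b < key G ρ (build G ρ i) c := by
        unfold key
        have hbn : (ρ b : ℕ) < Fintype.card V := (ρ b).2
        have h2 : labelVal G (build G ρ i) b + 1 ≤ labelVal G (build G ρ i) c := hcon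
        have h3 : (labelVal G (build G ρ i) b + 1) * Fintype.card V
            ≤ labelVal G (build G ρ i) c * Fintype.card V :=
          Nat.mul_le_mul_right _ h2
        have h4 : (labelVal G (build G ρ i) b + 1) * Fintype.card V
            = labelVal G (build G ρ i) b * Fintype.card V + Fintype.card V := by ring
        omega
      omega
    -- split build i at position τ a
    have hsplit : ∃ t, build G ρ i = build G ρ (τ a : ℕ) ++ (a :: t) := by
      obtain ⟨t, ht⟩ := build_prefix G ρ (show (τ a : ℕ) + 1 ≤ i by omega)
      refine ⟨t, ?_⟩
      rw [ht]
      have : build G ρ ((τ a : ℕ) + 1) = build G ρ (τ a : ℕ) ++ [pick G ρ (build G ρ (τ a : ℕ))] := rfl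
      rw [this, ← elt_eq_pick G ρ (by omega : (τ a : ℕ) < n), helt a]
      simp
    obtain ⟨t, ht⟩ := hsplit
    rw [ht] at hlab
    obtain ⟨d', hd'el, hd'b, hd'c⟩ := bits G t a hac hnab (build G ρ (τ a : ℕ)) hlab
    refine ⟨d', ?_, hd'b, hd'c⟩
    have := (hmemb d' (τ a : ℕ) (by omega)).mp hd'el
    exact this
  · -- plus rule
    intro u v huv hiff
    set i := (τ u : ℕ)
    have hlab : labelVal G (build G ρ i) u = labelVal G (build G ρ i) v := by
      apply labelVal_congr
      intro w hw
      exact hiff w ((hmemb w i (le_of_lt (hpos u))).mp hw)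
    have hkey := key_max G ρ (i := i) (j := (τ v : ℕ)) huv (hpos v)
    rw [helt v, helt u] at hkey
    unfold key at hkey
    rw [hlab] at hkey
    have hle : (ρ v : ℕ) ≤ (ρ u : ℕ) := by omega
    have hne : (ρ v : ℕ) ≠ (ρ u : ℕ) := by
      intro he
      have : v = u := ρ.injective (Fin.ext he)
      subst this
      exact lt_irrefl _ huv
    exact Fin.lt_def.mpr (by omega)

theorem exists_lexBFSPlus (G : SimpleGraph V) (ρ : VertexOrder V) :
    ∃ τ, IsLexBFSPlus G ρ τ := by
  classical
  letI : DecidableRel G.Adj := Classical.decRel _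
  exact ⟨ord G ρ, exists_lexBFSPlus' G ρ⟩


end E

section U


variable {V : Type*} [Fintype V] {G : SimpleGraph V}

theorem plus_unique {ρ τ τ' : VertexOrder V}
    (h1 : IsLexBFSPlus G ρ τ) (h2 : IsLexBFSPlus G ρ τ') : τ = τ' := by
  classical
  have key : ∀ i : ℕ, ∀ hi : i < Fintype.card V, τ.symm ⟨i, hi⟩ = τ'.symm ⟨i, hi⟩ := by
    intro i
    induction i using Nat.strong_induction_on with
    | _ i IH =>
      intro hi
      by_contra hne
      set u := τ.symm ⟨i, hi⟩ with hu
      set u' := τ'.symm ⟨i, hi⟩ with hu'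
      have hτu : τ u = ⟨i, hi⟩ := τ.apply_symm_apply _
      have hτ'u' : τ' u' = ⟨i, hi⟩ := τ'.apply_symm_apply _
      have hvu : (τ u : ℕ) = i := congrArg Fin.val hτu
      have hvu' : (τ' u' : ℕ) = i := congrArg Fin.val hτ'u'
      have agree : ∀ j : ℕ, ∀ hj : j < i, τ.symm ⟨j, by omega⟩ = τ'.symm ⟨j, by omega⟩ :=
        fun j hj => IH j hj (by omega)
      have hlow : ∀ w : V, (τ w : ℕ) < i → τ' w = τ w := by
        intro w hw
        have h : τ'.symm ⟨(τ w : ℕ), by omega⟩ = w := by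
          rw [← agree _ hw]
          simp
        conv_lhs => rw [← h]
        rw [τ'.apply_symm_apply]
      have hlow' : ∀ w : V, (τ' w : ℕ) < i → τ w = τ' w := by
        intro w hw
        have h : τ.symm ⟨(τ' w : ℕ), by omega⟩ = w := by
          rw [agree _ hw]
          simp
        conv_lhs => rw [← h]
        rw [τ.apply_symm_apply]
      have h1' : i < (τ' u : ℕ) := by
        rcases lt_trichotomy ((τ' u : ℕ)) i with h | h | h
        · exfalso
          have hx := congrArg Fin.val (hlow' u h)
          omega
        · exfalso
          apply hne
          have hh : τ' u = ⟨i, hi⟩ := Fin.ext h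
          rw [hu', ← hh, τ'.symm_apply_apply]
        · exact h
      have h2' : i < (τ u' : ℕ) := by
        rcases lt_trichotomy ((τ u' : ℕ)) i with h | h | h
        · exfalso
          have hx := congrArg Fin.val (hlow u' h)
          omega
        · exfalso
          apply hne
          have : τ u' = ⟨i, hi⟩ := Fin.ext h
          rw [hu, ← this, τ.symm_apply_apply]
        · exact h
      have D : ∀ j : ℕ, ∀ hj : j < i,
          (G.Adj (τ.symm ⟨j, by omega⟩) u ↔ G.Adj (τ.symm ⟨j, by omega⟩) u') := by
        intro j
        induction j using Nat.strong_induction_on with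
        | _ j IHj =>
          intro hj
          set w := τ.symm ⟨j, by omega⟩ with hwdef
          have hτw : (τ w : ℕ) = j := by rw [hwdef]; simp
          have hτ'w : (τ' w : ℕ) = j := by
            rw [hlow w (by omega)]
            exact hτw
          constructor
          · intro hwu
            by_contra hwu'
            obtain ⟨d, hd1, hd2, hd3⟩ := h2.1 w u' u
              (Fin.lt_def.mpr (by omega))
              (Fin.lt_def.mpr (by omega)) hwu hwu'
            have hdlt' : (τ' d : ℕ) < j := by
              have := Fin.lt_def.mp hd1
              omega
            have hdlt : (τ d : ℕ) < j := by
              rw [hlow' d (by omega)]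
              exact hdlt'
            have hIH := IHj (τ d : ℕ) hdlt (by omega)
            have hds : τ.symm ⟨(τ d : ℕ), by omega⟩ = d := by simp
            rw [hds] at hIH
            exact hd3 (hIH.mpr hd2)
          · intro hwu'
            by_contra hwu
            obtain ⟨d, hd1, hd2, hd3⟩ := h1.1 w u u'
              (Fin.lt_def.mpr (by omega))
              (Fin.lt_def.mpr (by omega)) hwu' hwu
            have hdlt : (τ d : ℕ) < j := by
              have := Fin.lt_def.mp hd1
              omega
            have hIH := IHj (τ d : ℕ) hdlt (by omega)
            have hds : τ.symm ⟨(τ d : ℕ), by omega⟩ = d := by simp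
            rw [hds] at hIH
            exact hd3 (hIH.mp hd2)
      have hρ1 : ρ u' < ρ u := by
        apply h1.2 u u' (Fin.lt_def.mpr (by omega))
        intro w hw
        have hj : (τ w : ℕ) < i := by
          have := Fin.lt_def.mp hw
          omega
        have hD := D (τ w : ℕ) hj
        have hws : τ.symm ⟨(τ w : ℕ), by omega⟩ = w := by simp
        rwa [hws] at hD
      have hρ2 : ρ u < ρ u' := by
        apply h2.2 u' u (Fin.lt_def.mpr (by omega))
        intro w hw
        have hj : (τ' w : ℕ) < i := by
          have := Fin.lt_def.mp hw
          omega
        have hjt : (τ w : ℕ) < i := by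
          rw [hlow' w hj]
          exact hj
        have hD := D (τ w : ℕ) hjt
        have hws : τ.symm ⟨(τ w : ℕ), by omega⟩ = w := by simp
        rw [hws] at hD
        exact hD.symm
      exact absurd hρ2 (lt_asymm hρ1)
  have hsymm : τ.symm = τ'.symm := by
    apply Equiv.ext
    intro x
    obtain ⟨j, hj⟩ := x
    exact key j hj
  have := congrArg Equiv.symm hsymm
  simpa using this


end U


section S

variable {V : Type*} [Fintype V] [DecidableEq V] {G : SimpleGraph V} [DecidableRel G.Adj]

lemma dist_pos_ne {x y : V} (hc : G.Connected) (h : x ≠ y) : 0 < G.dist x y :=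
  Nat.pos_of_ne_zero (fun h0 => h (((hc x y).dist_eq_zero_iff).mp h0))

/-- the root (first vertex) of an order. -/
noncomputable def rt (σ : VertexOrder V) (hn : 0 < Fintype.card V) : V := σ.symm ⟨0, hn⟩

/-- the last vertex of an order. -/
noncomputable def lst (σ : VertexOrder V) (hn : 0 < Fintype.card V) : V :=
  σ.symm ⟨Fintype.card V - 1, by omega⟩

lemma rt_val (σ : VertexOrder V) (hn : 0 < Fintype.card V) : (σ (rt σ hn) : ℕ) = 0 := by
  rw [rt, σ.apply_symm_apply]

lemma lst_val (σ : VertexOrder V) (hn : 0 < Fintype.card V) :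
    (σ (lst σ hn) : ℕ) = Fintype.card V - 1 := by
  rw [lst, σ.apply_symm_apply]

lemma ne_rt_iff (σ : VertexOrder V) (hn : 0 < Fintype.card V) (v : V) :
    v ≠ rt σ hn ↔ (σ v : ℕ) ≠ 0 := by
  constructor
  · intro h h0
    exact h (by rw [← σ.symm_apply_apply v, rt]; congr 1; exact Fin.ext h0)
  · intro h0 h
    rw [h, rt_val] at h0
    exact h0 rfl

lemma ne_lst_iff (σ : VertexOrder V) (hn : 0 < Fintype.card V) (v : V) :
    v ≠ lst σ hn ↔ (σ v : ℕ) ≠ Fintype.card V - 1 := by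
  constructor
  · intro h h0
    exact h (by rw [← σ.symm_apply_apply v, lst]; congr 1; exact Fin.ext h0)
  · intro h0 h
    rw [h, lst_val] at h0
    exact h0 rfl

lemma pos_inj (σ : VertexOrder V) {u v : V} (h : (σ u : ℕ) = (σ v : ℕ)) : u = v :=
  σ.injective (Fin.ext h)

/-- S7: the root of a plus order is the `ρ`-maximum. -/
lemma rt_rho_max {ρ σ : VertexOrder V} (hσ : IsLexBFSPlus G ρ σ) (hn : 0 < Fintype.card V)
    {v : V} (hv : v ≠ rt σ hn) : (ρ v : ℕ) < (ρ (rt σ hn) : ℕ) := by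
  have h0 : (σ (rt σ hn) : ℕ) = 0 := rt_val σ hn
  have hvv : (σ v : ℕ) ≠ 0 := (ne_rt_iff σ hn v).mp hv
  have := hσ.2 (rt σ hn) v (Fin.lt_def.mpr (by omega))
    (fun w hw => absurd (Fin.lt_def.mp hw) (by omega))
  exact Fin.lt_def.mp this

/-- the root of a plus order is the last vertex of `ρ`. -/
lemma rt_eq_lst {ρ σ : VertexOrder V} (hσ : IsLexBFSPlus G ρ σ) (hn : 0 < Fintype.card V) :
    rt σ hn = lst ρ hn := by
  by_contra h
  have h1 := rt_rho_max hσ hn (v := lst ρ hn) (fun he => h he.symm)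
  have h2 := lst_val ρ hn
  have h3 := (ρ (rt σ hn)).2
  omega

lemma walk_cross {P : V → Prop} :
    ∀ {x y : V}, G.Walk x y → P x → ¬ P y → ∃ u w, G.Adj u w ∧ P u ∧ ¬ P w := by
  intro x y p
  induction p with
  | nil => intro h h'; exact absurd h h'
  | @cons x m _ hadj q ih =>
      intro hx hy
      by_cases hm : P m
      · exact ih hm hy
      · exact ⟨x, m, hadj, hx, hm⟩

/-- S1 : every non-root vertex has an earlier neighbour. -/
lemma exists_earlier_nbr {ρ σ : VertexOrder V} (hσ : IsLexBFSPlus G ρ σ) (hc : G.Connected)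
    (hn : 0 < Fintype.card V) {v : V} (hv : v ≠ rt σ hn) :
    ∃ w, (σ w : ℕ) < (σ v : ℕ) ∧ G.Adj w v := by
  by_contra hno
  push_neg at hno
  have hrtlt : (σ (rt σ hn) : ℕ) < (σ v : ℕ) := by
    have h1 := rt_val σ hn
    have h2 := (ne_rt_iff σ hn v).mp hv
    omega
  have hcross := walk_cross (P := fun x => (σ x : ℕ) < (σ v : ℕ))
    ((hc (rt σ hn) v).some) hrtlt (lt_irrefl _)
  obtain ⟨x, y, hadj, hx, hy⟩ := hcross
  have hyv : y ≠ v := fun he => (hno x (by omega)) (he ▸ hadj)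
  have hyv' : (σ v : ℕ) < (σ y : ℕ) := by
    have : (σ y : ℕ) ≠ (σ v : ℕ) := fun he => hyv (pos_inj σ he)
    omega
  have hxv : ¬ G.Adj x v := hno x hx
  obtain ⟨d, hd1, hd2, _⟩ := hσ.1 x v y (Fin.lt_def.mpr hx) (Fin.lt_def.mpr hyv') hadj hxv
  exact (hno d (by have := Fin.lt_def.mp hd1; omega)) hd2

/-- the parent: earliest neighbour. -/
noncomputable def par (G : SimpleGraph V) [DecidableRel G.Adj] (σ : VertexOrder V) (v : V) : V :=
  if h : ((G.neighborFinset v).image (fun w => σ w)).Nonempty then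
    σ.symm (Finset.min' _ h) else v

lemma par_spec {ρ σ : VertexOrder V} (hσ : IsLexBFSPlus G ρ σ) (hc : G.Connected)
    (hn : 0 < Fintype.card V) {v : V} (hv : v ≠ rt σ hn) :
    G.Adj (par G σ v) v ∧ (σ (par G σ v) : ℕ) < (σ v : ℕ) ∧
      ∀ w, G.Adj w v → (σ (par G σ v) : ℕ) ≤ (σ w : ℕ) := by
  obtain ⟨w1, hw1lt, hw1adj⟩ := exists_earlier_nbr hσ hc hn hv
  have hmem1 : σ w1 ∈ (G.neighborFinset v).image (fun w => σ w) :=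
    Finset.mem_image_of_mem _ ((mem_neighborFinset G v w1).mpr hw1adj.symm)
  have hne : ((G.neighborFinset v).image (fun w => σ w)).Nonempty := ⟨σ w1, hmem1⟩
  have hpar : par G σ v = σ.symm (Finset.min' _ hne) := by rw [par, dif_pos hne]
  have hminmem := Finset.min'_mem _ hne
  obtain ⟨w0, hw0mem, hw0⟩ := Finset.mem_image.mp hminmem
  have hw0adj : G.Adj w0 v := ((mem_neighborFinset G v w0).mp hw0mem).symm
  have hparw0 : par G σ v = w0 := by
    rw [hpar, ← hw0, σ.symm_apply_apply]
  rw [hparw0]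
  refine ⟨hw0adj, ?_, ?_⟩
  · have hle := Finset.min'_le _ _ hmem1
    rw [← hw0] at hle
    have := Fin.le_def.mp hle
    omega
  · intro w hw
    have hmem : σ w ∈ (G.neighborFinset v).image (fun w => σ w) :=
      Finset.mem_image_of_mem _ ((mem_neighborFinset G v w).mpr hw.symm)
    have hle := Finset.min'_le _ _ hmem
    rw [← hw0] at hle
    exact Fin.le_def.mp hle

/-- S2 : parents are monotone. -/
lemma par_mono {ρ σ : VertexOrder V} (hσ : IsLexBFSPlus G ρ σ) (hc : G.Connected)
    (hn : 0 < Fintype.card V) {u v : V} (hu : u ≠ rt σ hn) (hv : v ≠ rt σ hn)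
    (huv : (σ u : ℕ) < (σ v : ℕ)) : (σ (par G σ u) : ℕ) ≤ (σ (par G σ v) : ℕ) := by
  obtain ⟨hpadj_u, hplt_u, hpmin_u⟩ := par_spec hσ hc hn hu
  obtain ⟨hpadj_v, hplt_v, hpmin_v⟩ := par_spec hσ hc hn hv
  by_contra hcon
  push_neg at hcon
  have hnadj : ¬ G.Adj (par G σ v) u := by
    intro h
    have := hpmin_u _ h
    omega
  obtain ⟨d, hd1, hd2, _⟩ := hσ.1 (par G σ v) u v
    (Fin.lt_def.mpr (by omega)) (Fin.lt_def.mpr huv) hpadj_v hnadj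
  have := hpmin_u d hd2
  have := Fin.lt_def.mp hd1
  omega

/-- S3 : the parent is the tree-parent (towards the root). -/
lemma par_up {ρ σ : VertexOrder V} (hT : G.IsTree) (hσ : IsLexBFSPlus G ρ σ)
    (hn : 0 < Fintype.card V) :
    ∀ v, v ≠ rt σ hn → G.dist (rt σ hn) (par G σ v) + 1 = G.dist (rt σ hn) v := by
  have hc := hT.isConnected
  suffices H : ∀ k : ℕ, ∀ v, (σ v : ℕ) = k → v ≠ rt σ hn →
      G.dist (rt σ hn) (par G σ v) + 1 = G.dist (rt σ hn) v by
    exact fun v hv => H _ v rfl hv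
  intro k
  induction k using Nat.strong_induction_on with
  | _ k IH =>
    intro v hk hv
    obtain ⟨hpadj, hplt, hpmin⟩ := par_spec hσ hc hn hv
    rcases adj_dist hT hpadj (rt σ hn) with h | h
    · omega
    · exfalso
      have hwne : par G σ v ≠ rt σ hn := by
        rw [ne_rt_iff σ hn]
        intro h0
        have hpeq : par G σ v = rt σ hn := by
          rw [← σ.symm_apply_apply (par G σ v), rt]
          congr 1
          exact Fin.ext h0
        rw [hpeq] at h
        have hd0 : G.dist (rt σ hn) (rt σ hn) = 0 := SimpleGraph.dist_self
        omega
      have hIH := IH (σ (par G σ v) : ℕ) (by omega) (par G σ v) rfl hwne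
      obtain ⟨hppadj, hpplt, _⟩ := par_spec hσ hc hn hwne
      have heq : par G σ (par G σ v) = v := by
        apply up_unique hT (a := rt σ hn) hppadj (hpadj.symm) (by omega) (by omega)
      have hlt : (σ (par G σ (par G σ v)) : ℕ) < (σ v : ℕ) := by omega
      rw [heq] at hlt
      omega

/-- S4 : distance from the root is monotone. -/
lemma dist_mono {ρ σ : VertexOrder V} (hT : G.IsTree) (hσ : IsLexBFSPlus G ρ σ)
    (hn : 0 < Fintype.card V) :
    ∀ u v, (σ u : ℕ) < (σ v : ℕ) → G.dist (rt σ hn) u ≤ G.dist (rt σ hn) v := by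
  have hc := hT.isConnected
  suffices H : ∀ k : ℕ, ∀ v, (σ v : ℕ) = k → ∀ u, (σ u : ℕ) < k →
      G.dist (rt σ hn) u ≤ G.dist (rt σ hn) v by
    exact fun u v huv => H _ v rfl u huv
  intro k
  induction k using Nat.strong_induction_on with
  | _ k IH =>
    intro v hk u huv
    by_cases hua : u = rt σ hn
    · rw [hua]
      simp [SimpleGraph.dist_self]
    · have hva : v ≠ rt σ hn := by
        rw [ne_rt_iff σ hn]
        omega
      have hmono := par_mono hσ hc hn hua hva (by omega)
      have hup_u := par_up hT hσ hn u hua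
      have hup_v := par_up hT hσ hn v hva
      rcases Nat.lt_or_ge (σ (par G σ u) : ℕ) (σ (par G σ v) : ℕ) with h | h
      · have hplt_v := (par_spec hσ hc hn hva).2.1
        have hIH := IH (σ (par G σ v) : ℕ) (by omega) (par G σ v) rfl (par G σ u) h
        omega
      · have heq : par G σ u = par G σ v := pos_inj σ (by omega)
        rw [heq] at hup_u
        omega

/-- S5 : the only earlier neighbour is the parent. -/
lemma earlier_nbr_eq_par {ρ σ : VertexOrder V} (hT : G.IsTree) (hσ : IsLexBFSPlus G ρ σ)
    (hn : 0 < Fintype.card V) {v : V} (hv : v ≠ rt σ hn) {w : V}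
    (hw : (σ w : ℕ) < (σ v : ℕ)) (hadj : G.Adj w v) : w = par G σ v := by
  have hc := hT.isConnected
  have hup := par_up hT hσ hn v hv
  have hpadj := (par_spec hσ hc hn hv).1
  rcases adj_dist hT hadj (rt σ hn) with h | h
  · -- dist a v = dist a w + 1 : w is an up neighbour
    exact up_unique hT (a := rt σ hn) hadj hpadj (by omega) (by omega)
  · -- w strictly below v: contradicts monotonicity
    exfalso
    have := dist_mono hT hσ hn w v hw
    omega

/-- S6 : tie-breaking among siblings. -/
lemma sibling_tie {ρ σ : VertexOrder V} (hT : G.IsTree) (hσ : IsLexBFSPlus G ρ σ)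
    (hn : 0 < Fintype.card V) {u v : V} (hu : u ≠ rt σ hn) (hv : v ≠ rt σ hn)
    (hpar : par G σ u = par G σ v) (huv : (σ u : ℕ) < (σ v : ℕ)) :
    (ρ v : ℕ) < (ρ u : ℕ) := by
  have hc := hT.isConnected
  have hplt_u := (par_spec hσ hc hn hu).2.1
  apply Fin.lt_def.mp
  apply hσ.2 u v (Fin.lt_def.mpr huv)
  intro w hw
  have hwu : (σ w : ℕ) < (σ u : ℕ) := Fin.lt_def.mp hw
  constructor
  · intro hadj
    have := earlier_nbr_eq_par hT hσ hn hu hwu hadj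
    rw [this, hpar]
    exact (par_spec hσ hc hn hv).1
  · intro hadj
    have := earlier_nbr_eq_par hT hσ hn hv (by omega) hadj
    rw [this, ← hpar]
    exact (par_spec hσ hc hn hu).1

end S


section AB

variable {V : Type*} [Fintype V] [DecidableEq V] {G : SimpleGraph V} [DecidableRel G.Adj]

/-- iterated parent. -/
noncomputable def anc (G : SimpleGraph V) [DecidableRel G.Adj] (σ : VertexOrder V) :
    ℕ → V → V
  | 0, v => v
  | k+1, v => par G σ (anc G σ k v)

lemma dist_le_lst {ρ σ : VertexOrder V} (hT : G.IsTree) (hσ : IsLexBFSPlus G ρ σ)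
    (hn : 0 < Fintype.card V) (x : V) :
    G.dist (rt σ hn) x ≤ G.dist (rt σ hn) (lst σ hn) := by
  by_cases h : x = lst σ hn
  · rw [h]
  · have h1 := (ne_lst_iff σ hn x).mp h
    have h2 := (σ x).2
    have h3 := lst_val σ hn
    exact dist_mono hT hσ hn x (lst σ hn) (by omega)

lemma anc_spec {ρ σ : VertexOrder V} (hT : G.IsTree) (hσ : IsLexBFSPlus G ρ σ)
    (hn : 0 < Fintype.card V) :
    ∀ k v, k ≤ G.dist (rt σ hn) v →
      G.dist (rt σ hn) (anc G σ k v) = G.dist (rt σ hn) v - k := by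
  intro k
  induction k with
  | zero => intro v _; simp [anc]
  | succ k ih =>
      intro v hk
      have h1 := ih v (by omega)
      have hne : anc G σ k v ≠ rt σ hn := by
        intro he
        rw [he] at h1
        have h0 : G.dist (rt σ hn) (rt σ hn) = 0 := SimpleGraph.dist_self
        omega
      have h2 := par_up hT hσ hn _ hne
      show G.dist (rt σ hn) (par G σ (anc G σ k v)) = _
      omega

lemma anc_ne_rt {ρ σ : VertexOrder V} (hT : G.IsTree) (hσ : IsLexBFSPlus G ρ σ)
    (hn : 0 < Fintype.card V) {k : ℕ} {v : V} (hk : k < G.dist (rt σ hn) v) :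
    anc G σ k v ≠ rt σ hn := by
  intro he
  have h1 := anc_spec hT hσ hn k v (by omega)
  rw [he] at h1
  have h0 : G.dist (rt σ hn) (rt σ hn) = 0 := SimpleGraph.dist_self
  omega

lemma anc_adj {ρ σ : VertexOrder V} (hT : G.IsTree) (hσ : IsLexBFSPlus G ρ σ)
    (hn : 0 < Fintype.card V) {k : ℕ} {v : V} (hk : k + 1 ≤ G.dist (rt σ hn) v) :
    G.Adj (anc G σ (k+1) v) (anc G σ k v) := by
  have hne : anc G σ k v ≠ rt σ hn := anc_ne_rt hT hσ hn (by omega)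
  exact (par_spec hσ hT.isConnected hn hne).1

lemma anc_self_dist {ρ σ : VertexOrder V} (hT : G.IsTree) (hσ : IsLexBFSPlus G ρ σ)
    (hn : 0 < Fintype.card V) :
    ∀ k v, k ≤ G.dist (rt σ hn) v → G.dist v (anc G σ k v) = k := by
  have hc := hT.isConnected
  intro k
  induction k with
  | zero => intro v _; simp [anc, SimpleGraph.dist_self]
  | succ k ih =>
      intro v hk
      have h1 := ih v (by omega)
      have hadj := anc_adj hT hσ hn (k := k) (v := v) hk
      have hd1 : G.dist (anc G σ k v) (anc G σ (k+1) v) ≤ 1 := by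
        have := dist_le hadj.symm.toWalk
        simpa using this
      have htri : G.dist v (anc G σ (k+1) v) ≤
          G.dist v (anc G σ k v) + G.dist (anc G σ k v) (anc G σ (k+1) v) := hc.dist_triangle
      have hup : G.dist v (anc G σ (k+1) v) ≤ k + 1 := by omega
      have hlow : k + 1 ≤ G.dist v (anc G σ (k+1) v) := by
        have hs := anc_spec hT hσ hn (k+1) v hk
        have htri2 : G.dist (rt σ hn) v ≤
            G.dist (rt σ hn) (anc G σ (k+1) v) + G.dist (anc G σ (k+1) v) v := hc.dist_triangle
        have hcomm : G.dist (anc G σ (k+1) v) v = G.dist v (anc G σ (k+1) v) :=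
          SimpleGraph.dist_comm ..
        omega
      omega

lemma anc_lt {ρ σ : VertexOrder V} (hT : G.IsTree) (hσ : IsLexBFSPlus G ρ σ)
    (hn : 0 < Fintype.card V) :
    ∀ k x y, k ≤ G.dist (rt σ hn) x → k ≤ G.dist (rt σ hn) y →
      (σ (anc G σ k x) : ℕ) < (σ (anc G σ k y) : ℕ) → (σ x : ℕ) < (σ y : ℕ) := by
  have hc := hT.isConnected
  intro k
  induction k with
  | zero => intro x y _ _ h; exact h
  | succ k ih =>
      intro x y hkx hky hlt
      have hxne : anc G σ k x ≠ rt σ hn := anc_ne_rt hT hσ hn (by omega)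
      have hyne : anc G σ k y ≠ rt σ hn := anc_ne_rt hT hσ hn (by omega)
      have hlt' : (σ (par G σ (anc G σ k x)) : ℕ) < (σ (par G σ (anc G σ k y)) : ℕ) := hlt
      have hxy : (σ (anc G σ k x) : ℕ) < (σ (anc G σ k y) : ℕ) := by
        rcases lt_trichotomy ((σ (anc G σ k x) : ℕ)) ((σ (anc G σ k y) : ℕ)) with h | h | h
        · exact h
        · exfalso
          have := pos_inj σ h
          rw [this] at hlt'
          omega
        · exfalso
          have := par_mono hσ hc hn hyne hxne h
          omega
      exact ih x y (by omega) (by omega) hxy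

/-- Lemma A : with enough history, the last vertex of `τ` is the first vertex of `σ`. -/
lemma lemmaA {π ρ σ τ : VertexOrder V} (hT : G.IsTree) (hn : 0 < Fintype.card V)
    (hπρ : IsLexBFSPlus G π ρ) (hρσ : IsLexBFSPlus G ρ σ) (hστ : IsLexBFSPlus G σ τ) :
    lst τ hn = rt σ hn := by
  have hc := hT.isConnected
  have haρ : rt σ hn = lst ρ hn := rt_eq_lst hρσ hn
  have hbσ : rt τ hn = lst σ hn := rt_eq_lst hστ hn
  -- farthestness facts
  have hra : ∀ x, G.dist (rt ρ hn) x ≤ G.dist (rt ρ hn) (rt σ hn) := by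
    intro x
    rw [haρ]
    exact dist_le_lst hT hπρ hn x
  have hab : ∀ x, G.dist (rt σ hn) x ≤ G.dist (rt σ hn) (rt τ hn) := by
    intro x
    rw [hbσ]
    exact dist_le_lst hT hρσ hn x
  have hBA : ∀ x, G.dist (rt τ hn) x ≤ G.dist (rt τ hn) (rt σ hn) :=
    two_sweep hT hra hab
  have hBC : ∀ x, G.dist (rt τ hn) x ≤ G.dist (rt τ hn) (lst τ hn) :=
    dist_le_lst hT hστ hn
  have hdBC : G.dist (rt τ hn) (lst τ hn) = G.dist (rt τ hn) (rt σ hn) :=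
    le_antisymm (hBA _) (hBC _)
  -- main induction
  have H : ∀ i, i ≤ G.dist (rt τ hn) (rt σ hn) →
      G.dist (rt σ hn) (anc G τ (G.dist (rt τ hn) (rt σ hn) - i) (lst τ hn))
        = G.dist (rt τ hn) (rt σ hn) - i := by
    intro i
    induction i with
    | zero =>
        intro _
        have h1 := anc_spec hT hστ hn (G.dist (rt τ hn) (rt σ hn)) (lst τ hn) (by omega)
        have h2 : anc G τ (G.dist (rt τ hn) (rt σ hn)) (lst τ hn) = rt τ hn :=
          (((hc (rt τ hn) _).dist_eq_zero_iff).mp (by omega)).symm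
        simp only [Nat.sub_zero]
        rw [h2]
        rw [SimpleGraph.dist_comm]
    | succ i ihi =>
        intro hi
        have hIH := ihi (by omega)
        set L := G.dist (rt τ hn) (rt σ hn) with hL
        have hLsub : L - i = (L - (i+1)) + 1 := by omega
        rw [hLsub] at hIH
        set j := L - (i + 1) with hj
        -- facts about the chain element
        have hjL : j ≤ L := by omega
        have hCj := anc_spec hT hστ hn j (lst τ hn) (by omega)
        rw [hdBC] at hCj
        -- dist B (anc j C) = L - j ≥ 1
        have hCjne : anc G τ j (lst τ hn) ≠ rt τ hn :=
          anc_ne_rt hT hστ hn (by omega)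
        have hadjj : G.Adj (anc G τ (j+1) (lst τ hn)) (anc G τ j (lst τ hn)) :=
          anc_adj hT hστ hn (by omega)
        rcases adj_dist hT hadjj (rt σ hn) with h | h
        · -- dist A (anc j C) = dist A (anc (j+1) C) + 1 = j + 2 : contradiction
          exfalso
          -- the ancestors of A
          have hWd := anc_spec hT hστ hn j (rt σ hn) (by omega)
          have hWs := anc_self_dist hT hστ hn j (rt σ hn) (by omega)
          have hW'd := anc_spec hT hστ hn (j+1) (rt σ hn) (by omega)
          have hW's := anc_self_dist hT hστ hn (j+1) (rt σ hn) (by omega)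
          have hCj1 := anc_spec hT hστ hn (j+1) (lst τ hn) (by omega)
          rw [hdBC] at hCj1
          -- U1 : anc (j+1) A = anc (j+1) C
          have hcommAB : G.dist (rt σ hn) (rt τ hn) = G.dist (rt τ hn) (rt σ hn) :=
            SimpleGraph.dist_comm ..
          have hcomm1 : G.dist (anc G τ (j+1) (rt σ hn)) (rt τ hn)
              = G.dist (rt τ hn) (anc G τ (j+1) (rt σ hn)) := SimpleGraph.dist_comm ..
          have hcomm2 : G.dist (anc G τ (j+1) (lst τ hn)) (rt τ hn)
              = G.dist (rt τ hn) (anc G τ (j+1) (lst τ hn)) := SimpleGraph.dist_comm ..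
          have heq : anc G τ (j+1) (rt σ hn) = anc G τ (j+1) (lst τ hn) := by
            apply geodesic_unique hT (x := rt σ hn) (y := rt τ hn)
            · omega
            · omega
            · omega
          -- siblings
          have hpp : par G τ (anc G τ j (rt σ hn)) = par G τ (anc G τ j (lst τ hn)) := by
            have e1 : anc G τ (j+1) (rt σ hn) = par G τ (anc G τ j (rt σ hn)) := rfl
            have e2 : anc G τ (j+1) (lst τ hn) = par G τ (anc G τ j (lst τ hn)) := rfl
            rw [← e1, ← e2, heq]
          have hWne : anc G τ j (rt σ hn) ≠ anc G τ j (lst τ hn) := by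
            intro he
            rw [he] at hWs
            have : G.dist (rt σ hn) (anc G τ j (lst τ hn))
                = G.dist (anc G τ j (lst τ hn)) (rt σ hn) := SimpleGraph.dist_comm ..
            omega
          have hWneB : anc G τ j (rt σ hn) ≠ rt τ hn :=
            anc_ne_rt hT hστ hn (by omega)
          rcases lt_trichotomy ((τ (anc G τ j (rt σ hn)) : ℕ))
              ((τ (anc G τ j (lst τ hn)) : ℕ)) with ht | ht | ht
          · -- W before c_j : sibling tie gives σ c_j < σ W, contradicting dist_mono for σ
            have hst := sibling_tie hT hστ hn hWneB hCjne hpp ht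
            have hdm := dist_mono hT hρσ hn _ _ hst
            have : G.dist (rt σ hn) (anc G τ j (lst τ hn))
                = G.dist (anc G τ j (lst τ hn)) (rt σ hn) := SimpleGraph.dist_comm ..
            have : G.dist (rt σ hn) (anc G τ j (rt σ hn))
                = G.dist (anc G τ j (rt σ hn)) (rt σ hn) := by
              rw [SimpleGraph.dist_comm]
            omega
          · exact hWne (pos_inj τ ht)
          · -- c_j before W : subtree ordering forces τ C < τ A
            have hal := anc_lt hT hστ hn j (lst τ hn) (rt σ hn) (by omega) (by omega) ht
            have hCval : (τ (lst τ hn) : ℕ) = Fintype.card V - 1 := lst_val τ hn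
            have hAne : rt σ hn ≠ lst τ hn := by
              intro he
              have : anc G τ j (rt σ hn) = anc G τ j (lst τ hn) := by rw [he]
              exact hWne this
            have hAval : (τ (rt σ hn) : ℕ) ≠ Fintype.card V - 1 :=
              (ne_lst_iff τ hn _).mp hAne
            have := (τ (rt σ hn)).2
            omega
        · omega
  have hfin := H (G.dist (rt τ hn) (rt σ hn)) le_rfl
  simp only [Nat.sub_self] at hfin
  have : anc G τ 0 (lst τ hn) = lst τ hn := rfl
  rw [this] at hfin
  exact (((hc _ _).dist_eq_zero_iff).mp hfin).symm

/-- Lemma B : with enough history, `LexBFS⁺` flips back. -/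
lemma lemmaB {π' π ρ σ τ : VertexOrder V} (hT : G.IsTree) (hn : 0 < Fintype.card V)
    (h1 : IsLexBFSPlus G π' π) (h2 : IsLexBFSPlus G π ρ) (h3 : IsLexBFSPlus G ρ σ)
    (h4 : IsLexBFSPlus G σ τ) : IsLexBFSPlus G τ σ := by
  have hc := hT.isConnected
  have hlastτ : lst τ hn = rt σ hn := lemmaA hT hn h2 h3 h4
  have hlastσ : lst σ hn = rt ρ hn := lemmaA hT hn h1 h2 h3
  have hbτσ : rt τ hn = lst σ hn := rt_eq_lst h4 hn
  have hbρ : rt ρ hn = rt τ hn := by rw [hbτσ, hlastσ]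
  refine ⟨h3.1, ?_⟩
  intro u v huv hiff
  have huvn : (σ u : ℕ) < (σ v : ℕ) := Fin.lt_def.mp huv
  have hvu : v ≠ u := fun he => by rw [he] at huvn; exact lt_irrefl _ huvn
  by_cases hua : u = rt σ hn
  · -- u is the σ-root, hence the τ-last vertex
    have hτu : (τ u : ℕ) = Fintype.card V - 1 := by rw [hua, ← hlastτ, lst_val]
    have hvne : v ≠ lst τ hn := by
      rw [hlastτ, ← hua]
      exact hvu
    have hτv : (τ v : ℕ) ≠ Fintype.card V - 1 := (ne_lst_iff τ hn v).mp hvne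
    have := (τ v).2
    exact Fin.lt_def.mpr (by omega)
  · have hva : v ≠ rt σ hn := by
      rw [ne_rt_iff]
      have h0 := rt_val σ hn
      have hu0 := (ne_rt_iff σ hn u).mp hua
      omega
    obtain ⟨hpadj, hplt, _⟩ := par_spec h3 hc hn hua
    have hadjv : G.Adj (par G σ u) v := (hiff (par G σ u) (Fin.lt_def.mpr hplt)).mp hpadj
    have hparv : par G σ u = par G σ v := earlier_nbr_eq_par hT h3 hn hva (by omega) hadjv
    have hρvu : (ρ v : ℕ) < (ρ u : ℕ) := sibling_tie hT h3 hn hua hva hparv huvn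
    have hdvu : G.dist (rt ρ hn) v ≤ G.dist (rt ρ hn) u := dist_mono hT h2 hn v u hρvu
    rw [hbρ] at hdvu
    by_cases hvb : v = rt τ hn
    · have hτv : (τ v : ℕ) = 0 := by rw [hvb, rt_val]
      have hub : u ≠ rt τ hn := fun he => hvu (by rw [hvb, he])
      have hτu : (τ u : ℕ) ≠ 0 := (ne_rt_iff τ hn u).mp hub
      exact Fin.lt_def.mpr (by omega)
    · have hub : u ≠ rt τ hn := by
        intro he
        have hσu : (σ u : ℕ) = Fintype.card V - 1 := by
          rw [he, hbτσ, lst_val]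
        have := (σ v).2
        omega
      rcases adj_dist hT hpadj (rt τ hn) with hu1 | hu1 <;>
        rcases adj_dist hT hadjv (rt τ hn) with hv1 | hv1
      · -- both children of p in the τ-tree
        have hpu : par G τ u = par G σ u := by
          apply up_unique hT (a := rt τ hn) (par_spec h4 hc hn hub).1 hpadj
          · exact par_up hT h4 hn u hub
          · omega
        have hpv : par G τ v = par G σ u := by
          apply up_unique hT (a := rt τ hn) (par_spec h4 hc hn hvb).1 hadjv
          · exact par_up hT h4 hn v hvb
          · omega
        have hpeq : par G τ u = par G τ v := by rw [hpu, hpv]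
        rcases lt_trichotomy ((τ u : ℕ)) ((τ v : ℕ)) with ht | ht | ht
        · exfalso
          have := sibling_tie hT h4 hn hub hvb hpeq ht
          omega
        · exact absurd (pos_inj τ ht) (fun he => hvu he.symm)
        · exact Fin.lt_def.mpr ht
      · -- v is the up-neighbour : strictly smaller depth
        have hd : G.dist (rt τ hn) v < G.dist (rt τ hn) u := by omega
        rcases lt_trichotomy ((τ u : ℕ)) ((τ v : ℕ)) with ht | ht | ht
        · exfalso
          have := dist_mono hT h4 hn u v ht
          omega
        · exact absurd (pos_inj τ ht) (fun he => hvu he.symm)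
        · exact Fin.lt_def.mpr ht
      · -- u up, v down : contradicts dist v ≤ dist u
        exfalso
        omega
      · -- both up-neighbours of p : u = v, absurd
        exfalso
        have := up_unique hT (a := rt τ hn) hpadj.symm hadjv.symm (by omega) (by omega)
        exact hvu this.symm

lemma no_fixed_point {σ : VertexOrder V} (hn : 2 ≤ Fintype.card V) :
    ¬ IsLexBFSPlus G σ σ := by
  intro h
  set u := σ.symm ⟨0, by omega⟩ with hu
  set v := σ.symm ⟨1, by omega⟩ with hv
  have hσu : (σ u : ℕ) = 0 := by rw [hu, σ.apply_symm_apply]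
  have hσv : (σ v : ℕ) = 1 := by rw [hv, σ.apply_symm_apply]
  have := h.2 u v (Fin.lt_def.mpr (by omega))
    (fun w hw => absurd (Fin.lt_def.mp hw) (by omega))
  have := Fin.lt_def.mp this
  omega

end AB

end LexTree

/-- Every finite tree with at least two vertices satisfies `LexCycle(T) = 2`. -/
theorem tree_lexCycle_eq_two {V : Type*} [Fintype V] (T : SimpleGraph V)
    (hT : T.IsTree) (hn : 2 ≤ Fintype.card V) :
    LexCycle T = 2 := by
  classical
  letI : DecidableEq V := Classical.decEq V
  letI : DecidableRel T.Adj := Classical.decRel _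
  haveI : Nonempty V := Fintype.card_pos_iff.mp (by omega)
  have hn1 : 0 < Fintype.card V := by omega
  -- the uniqueness and flipping machinery
  -- build a chain of LexBFS⁺ iterates
  obtain ⟨ρ1, h01⟩ := LexTree.exists_lexBFSPlus T (Fintype.equivFin V)
  obtain ⟨ρ2, h12⟩ := LexTree.exists_lexBFSPlus T ρ1
  obtain ⟨ρ3, h23⟩ := LexTree.exists_lexBFSPlus T ρ2
  obtain ⟨ρ4, h34⟩ := LexTree.exists_lexBFSPlus T ρ3
  have hflip : IsLexBFSPlus T ρ4 ρ3 := LexTree.lemmaB hT hn1 h01 h12 h23 h34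
  have hneq : ρ3 ≠ ρ4 := by
    intro he
    rw [← he] at h34
    exact LexTree.no_fixed_point hn h34
  -- a 2-cycle exists
  have h2 : HasLexBFSCycle T 2 := by
    refine ⟨fun i => if i % 2 = 0 then ρ3 else ρ4, ?_, ?_⟩
    · intro i j hi hj hij
      interval_cases i <;> interval_cases j <;> simp_all
    · intro i hi
      interval_cases i
      · simpa using h34
      · simpa using hflip
  -- no longer cycles
  have hbound : ∀ k, HasLexBFSCycle T k → k ≤ 2 := by
    intro k hk
    by_contra hk3
    push_neg at hk3
    obtain ⟨s, hinj, hrel⟩ := hk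
    have hkpos : 0 < k := by omega
    have hrel' : ∀ m : ℕ, IsLexBFSPlus T (s (m % k)) (s ((m + 1) % k)) := by
      intro m
      have h := hrel (m % k) (Nat.mod_lt _ hkpos)
      have he : (m % k + 1) % k = (m + 1) % k := by
        conv_rhs => rw [Nat.add_mod]
        rw [Nat.mod_eq_of_lt (show 1 < k by omega)]
      rwa [he] at h
    obtain ⟨m, hm⟩ : ∃ m, k = m + 3 := ⟨k - 3, by omega⟩
    subst hm
    have hflip2 : IsLexBFSPlus T (s ((m+1+1+1+1) % (m+3))) (s ((m+1+1+1) % (m+3))) :=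
      LexTree.lemmaB hT hn1 (hrel' m) (hrel' (m+1)) (hrel' (m+1+1)) (hrel' (m+1+1+1))
    have huniq : s ((m+1+1+1) % (m+3)) = s ((m+1+1+1+1+1) % (m+3)) :=
      LexTree.plus_unique hflip2 (hrel' (m+1+1+1+1))
    have e1 : (m+1+1+1) % (m+3) = 0 := by
      rw [show m+1+1+1 = m+3 by omega]
      exact Nat.mod_self _
    have e2 : (m+1+1+1+1+1) % (m+3) = 2 := by
      rw [show m+1+1+1+1+1 = (m+3)+2 by omega, Nat.add_mod_left]
      exact Nat.mod_eq_of_lt (by omega)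
    rw [e1, e2] at huniq
    have := hinj 0 2 (by omega) (by omega) huniq
    omega
  -- compute the supremum
  have hmem : 2 ∈ {k | HasLexBFSCycle T k} := h2
  have hub : 2 ∈ upperBounds {k | HasLexBFSCycle T k} := fun k hk => hbound k hk
  exact le_antisymm (csSup_le ⟨2, hmem⟩ (fun k hk => hbound k hk)) (le_csSup ⟨2, hub⟩ hmem)
end
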